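/- arXiv:1907.09009 — 3 statements merged into one kernel-verified Lean document; each statement's English description precedes it below -/
import Mathlib

section
/- Let p ≥ 2 and let a, b be real numbers. Then (|a|^{p-2}a - |b|^{p-2}b)(a-b) ≥ (a-b)^2 ∫₀¹ |t a + (1-t) b|^{p-2} dt. -/
open intervalIntegral Real

lemma aux_cont {q : ℝ} (hq : 0 ≤ q) : Continuous (fun x : ℝ => |x| ^ q) := by
  apply continuous_iff_continuousAt.2
  intro x
  exact (Real.continuousAt_rpow_const _ _ (Or.inr hq)).comp continuous_abs.continuousAt

lemma aux_deriv {q : ℝ} (hq : 0 ≤ q) (x : ℝ) :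
    HasDerivAt (fun x : ℝ => |x| ^ q * x) ((q + 1) * |x| ^ q) x := by
  rcases eq_or_lt_of_le hq with hq0 | hq0
  · have : (fun x : ℝ => |x| ^ q * x) = fun x : ℝ => x := by
      funext y; rw [← hq0, Real.rpow_zero, one_mul]
    rw [this, ← hq0]
    exact (hasDerivAt_id' x).congr_deriv (by simp)
  rcases eq_or_ne x 0 with rfl | hx
  · have h0 : (q + 1) * |(0:ℝ)| ^ q = 0 := by
      rw [abs_zero, Real.zero_rpow hq0.ne', mul_zero]
    rw [h0, hasDerivAt_iff_tendsto_slope]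
    have heq : ∀ᶠ h in nhdsWithin (0:ℝ) {(0:ℝ)}ᶜ,
        slope (fun x : ℝ => |x| ^ q * x) 0 h = |h| ^ q := by
      filter_upwards [self_mem_nhdsWithin] with h hh
      have hh' : h ≠ 0 := hh
      rw [slope_def_field]; simp only [mul_zero, sub_zero]; rw [mul_div_assoc, div_self hh', mul_one]
    rw [Filter.tendsto_congr' heq]
    have : Filter.Tendsto (fun h : ℝ => |h| ^ q) (nhds 0) (nhds 0) := by
      have := (aux_cont hq).continuousAt (x := (0:ℝ))
      simpa [abs_zero, Real.zero_rpow hq0.ne'] using this.tendsto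
    exact this.mono_left nhdsWithin_le_nhds
  · have habs : HasDerivAt (fun x : ℝ => |x|) (SignType.sign x : ℝ) x := by
      rcases lt_or_gt_of_ne hx with h | h
      · have : HasDerivAt (fun x : ℝ => -x) (-1) x := (hasDerivAt_id x).neg
        apply this.congr_of_eventuallyEq ?_ |>.congr_deriv ?_
        · filter_upwards [eventually_lt_nhds h] with y hy
          simp [abs_of_neg hy]
        · simp [h]
      · apply (hasDerivAt_id x).congr_of_eventuallyEq ?_ |>.congr_deriv ?_
        · filter_upwards [eventually_gt_nhds h] with y hy
          simp [abs_of_pos hy]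
        · simp [h]
    have habsx : |x| ≠ 0 := abs_ne_zero.2 hx
    have hr : HasDerivAt (fun y : ℝ => y ^ q) (q * |x| ^ (q - 1)) |x| :=
      Real.hasDerivAt_rpow_const (Or.inl habsx)
    have h1 : HasDerivAt (fun x : ℝ => |x| ^ q) (q * |x| ^ (q - 1) * (SignType.sign x : ℝ)) x :=
      hr.comp x habs
    have h2 := h1.mul (hasDerivAt_id x)
    refine h2.congr_deriv ?_
    have hsx : (SignType.sign x : ℝ) * x = |x| := by
      rcases lt_or_gt_of_ne hx with h | h
      · simp [h, abs_of_neg h]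
      · simp [h, abs_of_pos h]
    have : q * |x| ^ (q - 1) * (SignType.sign x : ℝ) * x = q * |x| ^ q := by
      rw [mul_assoc, hsx, mul_assoc, ← Real.rpow_add_one habsx]
      ring_nf
    rw [id_eq, this]; ring

theorem stmt_4 (p a b : ℝ) (hp : 2 ≤ p) :
    (a - b) ^ 2 * ∫ t in (0:ℝ)..1, |t * a + (1 - t) * b| ^ (p - 2) ≤
      (|a| ^ (p - 2) * a - |b| ^ (p - 2) * b) * (a - b) := by
  set q := p - 2 with hqdef
  have hq : 0 ≤ q := by linarith
  have hu : ∀ t : ℝ, HasDerivAt (fun t => t * a + (1 - t) * b) (a - b) t := by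
    intro t
    have : HasDerivAt (fun t : ℝ => t * a + (1 - t) * b) (1 * a + (0 - 1) * b) t :=
      ((hasDerivAt_id t).mul_const a).add (((hasDerivAt_const t (1:ℝ)).sub (hasDerivAt_id t)).mul_const b)
    exact this.congr_deriv (by ring)
  have hg : ∀ t : ℝ, HasDerivAt (fun t => |t * a + (1 - t) * b| ^ q * (t * a + (1 - t) * b))
      ((q + 1) * |t * a + (1 - t) * b| ^ q * (a - b)) t := by
    intro t
    exact (aux_deriv hq (t * a + (1 - t) * b)).comp t (hu t)
  have hcont : Continuous fun t : ℝ => (q + 1) * |t * a + (1 - t) * b| ^ q * (a - b) := by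
    have := (aux_cont hq).comp (by continuity : Continuous fun t : ℝ => t * a + (1 - t) * b)
    exact ((continuous_const.mul this).mul continuous_const)
  have hftc : ∫ t in (0:ℝ)..1, (q + 1) * |t * a + (1 - t) * b| ^ q * (a - b)
      = |a| ^ q * a - |b| ^ q * b := by
    rw [intervalIntegral.integral_eq_sub_of_hasDerivAt (fun t _ => hg t)
      (hcont.intervalIntegrable 0 1)]
    norm_num
  have hint : IntervalIntegrable (fun t : ℝ => |t * a + (1 - t) * b| ^ q) MeasureTheory.volume 0 1 := by
    exact ((aux_cont hq).comp (by continuity : Continuous fun t : ℝ => t * a + (1 - t) * b)).intervalIntegrable 0 1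
  have hIpos : 0 ≤ ∫ t in (0:ℝ)..1, |t * a + (1 - t) * b| ^ q := by
    apply intervalIntegral.integral_nonneg (by norm_num)
    intro t _
    positivity
  have hpull : ∫ t in (0:ℝ)..1, (q + 1) * |t * a + (1 - t) * b| ^ q * (a - b)
      = (q + 1) * (a - b) * ∫ t in (0:ℝ)..1, |t * a + (1 - t) * b| ^ q := by
    rw [← intervalIntegral.integral_const_mul]
    congr 1; funext t; ring
  have key : (|a| ^ q * a - |b| ^ q * b) * (a - b)
      = (q + 1) * (a - b) ^ 2 * ∫ t in (0:ℝ)..1, |t * a + (1 - t) * b| ^ q := by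
    rw [← hftc, hpull]; ring
  rw [key]
  have h1 : (1:ℝ) ≤ q + 1 := by linarith
  nlinarith [sq_nonneg (a - b), mul_nonneg (sq_nonneg (a-b)) hIpos]
end

section
/- Let p ≥ 2 and a, b real numbers with |a| ≥ |b-a| and |a-b| ≤ 1. Then (|a|^{p-2}a - |b|^{p-2}b)(a-b) ≥ |a-b|^p / (p-1). -/
/-!
On `[0, ∞)` the signed power `φ(t) = |t|^(p-2) t` is `t^(p-1)`, and superadditivity of
`t ↦ t^(p-1)` gives `(a - b)^(p-1) ≤ a^(p-1) - b^(p-1)` for `0 ≤ b ≤ a`; multiplying by `a - b`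
yields `|a - b|^p ≤ (φ a - φ b)(a - b)`. Since `φ` is odd, the same holds when `a, b ≤ 0`.
The hypothesis `|b - a| ≤ |a|` forces `a` and `b` to have the same sign, and dividing by
`p - 1 ≥ 1` only weakens the bound.
-/

namespace Real

lemma rpow_sub_two_mul_self {x p : ℝ} (hx : 0 ≤ x) (hp : p ≠ 1) :
    x ^ (p - 2) * x = x ^ (p - 1) := by
  rw [← rpow_add_one' hx (by contrapose! hp; linarith)]
  ring_nf

lemma rpow_sub_le_sub_rpow {q a b : ℝ} (hq : 1 ≤ q) (hb : 0 ≤ b) (hba : b ≤ a) :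
    (a - b) ^ q ≤ a ^ q - b ^ q := by
  have := add_rpow_le_rpow_add (sub_nonneg.2 hba) hb hq
  rw [sub_add_cancel] at this
  linarith

lemma abs_sub_rpow_add_one_le {q a b : ℝ} (hq : 1 ≤ q) (ha : 0 ≤ a) (hb : 0 ≤ b) :
    |a - b| ^ (q + 1) ≤ (a ^ q - b ^ q) * (a - b) := by
  wlog hba : b ≤ a generalizing a b
  · calc |a - b| ^ (q + 1) = |b - a| ^ (q + 1) := by rw [abs_sub_comm]
      _ ≤ (b ^ q - a ^ q) * (b - a) := this hb ha (by linarith)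
      _ = (a ^ q - b ^ q) * (a - b) := by ring
  have hd : 0 ≤ a - b := sub_nonneg.2 hba
  rw [abs_of_nonneg hd, rpow_add_one' hd (by linarith)]
  exact mul_le_mul_of_nonneg_right (rpow_sub_le_sub_rpow hq hb hba) hd

lemma abs_sub_rpow_le_of_nonneg {p a b : ℝ} (hp : 2 ≤ p) (ha : 0 ≤ a) (hb : 0 ≤ b) :
    |a - b| ^ p ≤ (|a| ^ (p - 2) * a - |b| ^ (p - 2) * b) * (a - b) := by
  have hp1 : p ≠ 1 := by linarith
  rw [abs_of_nonneg ha, abs_of_nonneg hb, rpow_sub_two_mul_self ha hp1,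
    rpow_sub_two_mul_self hb hp1]
  simpa using abs_sub_rpow_add_one_le (q := p - 1) (by linarith) ha hb

lemma abs_sub_rpow_le_of_mul_nonneg {p a b : ℝ} (hp : 2 ≤ p) (hab : 0 ≤ a * b) :
    |a - b| ^ p ≤ (|a| ^ (p - 2) * a - |b| ^ (p - 2) * b) * (a - b) := by
  rcases mul_nonneg_iff.1 hab with ⟨ha, hb⟩ | ⟨ha, hb⟩
  · exact abs_sub_rpow_le_of_nonneg hp ha hb
  · have := abs_sub_rpow_le_of_nonneg hp (neg_nonneg.2 ha) (neg_nonneg.2 hb)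
    calc |a - b| ^ p = |-a - -b| ^ p := by rw [← abs_neg]; ring_nf
      _ ≤ (|-a| ^ (p - 2) * -a - |-b| ^ (p - 2) * -b) * (-a - -b) := this
      _ = (|a| ^ (p - 2) * a - |b| ^ (p - 2) * b) * (a - b) := by rw [abs_neg, abs_neg]; ring

end Real

lemma mul_nonneg_of_abs_sub_le_abs {a b : ℝ} (h : |b - a| ≤ |a|) : 0 ≤ a * b := by
  have := sq_le_sq' (abs_le.1 h).1 (abs_le.1 h).2
  rw [sq_abs] at this
  nlinarith [sq_nonneg b]

theorem stmt_5_general (p a b : ℝ) (hp : 2 ≤ p) (h : |b - a| ≤ |a|) :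
    |a - b| ^ p / (p - 1) ≤ (|a| ^ (p - 2) * a - |b| ^ (p - 2) * b) * (a - b) := by
  calc |a - b| ^ p / (p - 1) ≤ |a - b| ^ p := div_le_self (by positivity) (by linarith)
    _ ≤ _ := Real.abs_sub_rpow_le_of_mul_nonneg hp (mul_nonneg_of_abs_sub_le_abs h)

theorem stmt_5 (p a b : ℝ) (hp : 2 ≤ p) (h : |b - a| ≤ |a|) (hab : |a - b| ≤ 1) :
    |a - b| ^ p / (p - 1) ≤ (|a| ^ (p - 2) * a - |b| ^ (p - 2) * b) * (a - b) :=
  stmt_5_general p a b hp h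
end

section
/- Let 1 < p < ∞, k ≥ 1 and a, b, m ≥ 0 be real numbers. Set a_m = min{a, m} and b_m = min{b, m}. Then |a-b|^{p-2}(a-b)(a_m^k - b_m^k) ≥ (k p^p / (k+p-1)^p) |a_m^{(k+p-1)/p} - b_m^{(k+p-1)/p}|^p. -/
open MeasureTheory Set intervalIntegral

/-- Key scalar inequality via Hölder. -/
lemma key_ineq {p k x y : ℝ} (hp1 : 1 < p) (hk : 1 ≤ k) (hy : 0 ≤ y) (hxy : y ≤ x) :
    ((x ^ ((k + p - 1) / p) - y ^ ((k + p - 1) / p)) / ((k + p - 1) / p)) ^ p ≤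
      (x ^ k - y ^ k) / k * (x - y) ^ (p - 1) := by
  have hp0 : (0:ℝ) < p := by linarith
  have hk0 : (0:ℝ) < k := by linarith
  have hx : (0:ℝ) ≤ x := le_trans hy hxy
  set α : ℝ := (k + p - 1) / p with hα
  have hα1 : 1 ≤ α := by
    rw [hα, le_div_iff₀ hp0]; linarith
  have hα0 : 0 < α := lt_of_lt_of_le one_pos hα1
  set q : ℝ := p / (p - 1) with hq
  have hpq : p.HolderConjugate q := Real.HolderConjugate.conjExponent hp1
  have hαp : (α - 1) * p = k - 1 := by
    rw [hα]; field_simp; ring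
  have hαm1 : 0 ≤ α - 1 := by linarith
  set μ : Measure ℝ := volume.restrict (Ioc y x) with hμ
  haveI : IsFiniteMeasure μ := by
    constructor
    rw [hμ, Measure.restrict_apply_univ, Real.volume_Ioc]
    exact ENNReal.ofReal_lt_top
  have hmeas : AEStronglyMeasurable (fun t : ℝ => t ^ (α - 1)) μ :=
    (measurable_id.pow_const _).aestronglyMeasurable
  have hmemf : MemLp (fun t : ℝ => t ^ (α - 1)) (ENNReal.ofReal p) μ := by
    refine MemLp.of_bound hmeas (x ^ (α - 1)) ?_
    filter_upwards [ae_restrict_mem measurableSet_Ioc] with t ht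
    have ht0 : 0 ≤ t := le_trans hy ht.1.le
    rw [Real.norm_of_nonneg (Real.rpow_nonneg ht0 _)]
    exact Real.rpow_le_rpow ht0 ht.2 hαm1
  have hmemg : MemLp (fun _ : ℝ => (1:ℝ)) (ENNReal.ofReal q) μ := memLp_const 1
  have hfnn : 0 ≤ᵐ[μ] (fun t : ℝ => t ^ (α - 1)) := by
    filter_upwards [ae_restrict_mem measurableSet_Ioc] with t ht
    exact Real.rpow_nonneg (le_trans hy ht.1.le) _
  have hgnn : 0 ≤ᵐ[μ] (fun _ : ℝ => (1:ℝ)) :=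
    Filter.Eventually.of_forall fun _ => zero_le_one
  have holder := integral_mul_le_Lp_mul_Lq_of_nonneg hpq hfnn hgnn hmemf hmemg
  simp only [mul_one, Real.one_rpow] at holder
  -- compute the three integrals
  have hI1 : ∫ t, t ^ (α - 1) ∂μ = (x ^ α - y ^ α) / α := by
    rw [hμ, ← _root_.intervalIntegral.integral_of_le hxy,
      integral_rpow (Or.inl (by linarith : (-1:ℝ) < α - 1))]
    norm_num
  have hI2 : ∫ t, (t ^ (α - 1)) ^ p ∂μ = (x ^ k - y ^ k) / k := by
    have : ∀ t ∈ Ioc y x, (t ^ (α - 1)) ^ p = t ^ (k - 1) := by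
      intro t ht
      rw [← Real.rpow_mul (le_trans hy ht.1.le), hαp]
    rw [hμ, setIntegral_congr_fun measurableSet_Ioc this,
      ← _root_.intervalIntegral.integral_of_le hxy,
      integral_rpow (Or.inl (by linarith : (-1:ℝ) < k - 1))]
    norm_num
  have hI3 : ∫ _, (1:ℝ) ∂μ = x - y := by
    rw [hμ, setIntegral_const, Real.volume_real_Ioc_of_le hxy, smul_eq_mul,
      mul_one]
  rw [hI1, hI2, hI3] at holder
  -- raise to the p-th power
  have hA : 0 ≤ (x ^ k - y ^ k) / k :=
    div_nonneg (sub_nonneg.2 (Real.rpow_le_rpow hy hxy hk0.le)) hk0.le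
  have hxy0 : (0:ℝ) ≤ x - y := sub_nonneg.2 hxy
  have hL : 0 ≤ (x ^ α - y ^ α) / α :=
    div_nonneg (sub_nonneg.2 (Real.rpow_le_rpow hy hxy hα0.le)) hα0.le
  have hRHSnn : 0 ≤ ((x ^ k - y ^ k) / k) ^ (1 / p) := Real.rpow_nonneg hA _
  have := Real.rpow_le_rpow hL holder hp0.le
  refine le_trans this ?_
  rw [Real.mul_rpow hRHSnn (Real.rpow_nonneg hxy0 _), ← Real.rpow_mul hA, ← Real.rpow_mul hxy0]
  have e1 : 1 / p * p = 1 := by field_simp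
  have e2 : 1 / q * p = p - 1 := by
    rw [hq]; field_simp
  rw [e1, e2, Real.rpow_one]

lemma helper (p k a b m : ℝ) (hp1 : 1 < p) (hk : 1 ≤ k)
    (ha : 0 ≤ a) (hb : 0 ≤ b) (hm : 0 ≤ m) (hba : b ≤ a) :
    k * p ^ p / (k + p - 1) ^ p *
        |min a m ^ ((k + p - 1) / p) - min b m ^ ((k + p - 1) / p)| ^ p ≤
      |a - b| ^ (p - 2) * (a - b) * (min a m ^ k - min b m ^ k) := by
  have hp0 : (0:ℝ) < p := by linarith
  rcases eq_or_lt_of_le hba with rfl | hlt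
  · simp [sub_self, Real.zero_rpow hp0.ne']
  set α : ℝ := (k + p - 1) / p with hα
  have hα0 : 0 < α := div_pos (by linarith) hp0
  set am := min a m with ham
  set bm := min b m with hbm
  have hbm0 : 0 ≤ bm := le_min hb hm
  have hmm : bm ≤ am := min_le_min hba le_rfl
  have ham0 : 0 ≤ am := le_trans hbm0 hmm
  have habm : am - bm ≤ a - b := by
    rcases le_total b m with h | h
    · rw [hbm, min_eq_left h]
      have : am ≤ a := min_le_left _ _
      linarith
    · rw [hbm, min_eq_right h, ham, min_eq_right (le_trans h hba)]
      linarith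
  have hXY : 0 ≤ am ^ α - bm ^ α :=
    sub_nonneg.2 (Real.rpow_le_rpow hbm0 hmm hα0.le)
  have hK : 0 ≤ am ^ k - bm ^ k :=
    sub_nonneg.2 (Real.rpow_le_rpow hbm0 hmm (by linarith))
  have key := key_ineq hp1 hk hbm0 hmm
  rw [← hα] at key
  have hppos : (0:ℝ) < p ^ p := Real.rpow_pos_of_pos hp0 p
  have hkp1 : (0:ℝ) < (k + p - 1) ^ p := Real.rpow_pos_of_pos (by linarith) p
  have hk0 : (0:ℝ) < k := by linarith
  have h1 : k * p ^ p / (k + p - 1) ^ p * |am ^ α - bm ^ α| ^ p =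
      ((am ^ α - bm ^ α) / α) ^ p * k := by
    rw [abs_of_nonneg hXY, Real.div_rpow hXY hα0.le, hα,
      Real.div_rpow (by linarith : (0:ℝ) ≤ k + p - 1) hp0.le]
    field_simp
  rw [h1]
  have h2 : ((am ^ α - bm ^ α) / α) ^ p * k ≤ (am ^ k - bm ^ k) * (am - bm) ^ (p - 1) := by
    calc ((am ^ α - bm ^ α) / α) ^ p * k
        ≤ (am ^ k - bm ^ k) / k * (am - bm) ^ (p - 1) * k := by
          exact mul_le_mul_of_nonneg_right key hk0.le
      _ = (am ^ k - bm ^ k) * (am - bm) ^ (p - 1) := by field_simp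
  refine le_trans h2 ?_
  have h3 : (am - bm) ^ (p - 1) ≤ (a - b) ^ (p - 1) :=
    Real.rpow_le_rpow (by linarith) habm (by linarith)
  have h4 : |a - b| ^ (p - 2) * (a - b) = (a - b) ^ (p - 1) := by
    have hab : (0:ℝ) < a - b := by linarith
    rw [abs_of_pos hab]
    have e : p - 1 = p - 2 + 1 := by ring
    rw [e, Real.rpow_add hab, Real.rpow_one]
  rw [h4]
  calc (am ^ k - bm ^ k) * (am - bm) ^ (p - 1)
      ≤ (am ^ k - bm ^ k) * (a - b) ^ (p - 1) := mul_le_mul_of_nonneg_left h3 hK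
    _ = (a - b) ^ (p - 1) * (am ^ k - bm ^ k) := by ring

theorem stmt_7 (p k a b m : ℝ) (hp1 : 1 < p) (hk : 1 ≤ k)
    (ha : 0 ≤ a) (hb : 0 ≤ b) (hm : 0 ≤ m) :
    k * p ^ p / (k + p - 1) ^ p *
        |min a m ^ ((k + p - 1) / p) - min b m ^ ((k + p - 1) / p)| ^ p ≤
      |a - b| ^ (p - 2) * (a - b) * (min a m ^ k - min b m ^ k) := by
  rcases le_total b a with h | h
  · exact helper p k a b m hp1 hk ha hb hm h
  · have h2 : |a - b| ^ (p - 2) * (a - b) * (min a m ^ k - min b m ^ k) =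
        |b - a| ^ (p - 2) * (b - a) * (min b m ^ k - min a m ^ k) := by
      rw [abs_sub_comm]; ring
    rw [h2, abs_sub_comm (min a m ^ ((k + p - 1) / p))]
    exact helper p k b a m hp1 hk hb ha hm h
end
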